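/- Let n ≥ 2. A vector v ∈ ℝ^n is a nonnegative linear combination of the vectors e_i − e_j and e_i + e_j for 1 ≤ i < j ≤ n if and only if Σ_{i=1}^k v_i ≥ 0 for every 1 ≤ k ≤ n−2 and Σ_{i=1}^{n−1} v_i ≥ |v_n|. -/

import Mathlib

/-- The first `k` entries' partial sum of a vector in `ℝ^n`. -/
def psum {n : ℕ} (v : Fin n → ℝ) (k : ℕ) : ℝ :=
  ∑ i : Fin n, if (i : ℕ) < k then v i else 0

/-- Membership in the cone `C_D ⊆ ℝ^n` generated by the vectors `e i - e j` and
`e i + e j` for `i < j`, i.e. being a nonnegative linear combination of them. -/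
def inConeD (n : ℕ) (v : Fin n → ℝ) : Prop :=
  ∃ a b : Fin n → Fin n → ℝ,
    (∀ i j, 0 ≤ a i j) ∧ (∀ i j, 0 ≤ b i j) ∧
    v = ∑ i : Fin n, ∑ j : Fin n,
      (if i < j then
        a i j • (Pi.single i (1 : ℝ) - Pi.single j 1) +
          b i j • (Pi.single i (1 : ℝ) + Pi.single j 1)
      else 0)

/-!
Necessity: every inequality says that a functional `w ⬝ᵥ ·` is nonnegative on the cone, and it
is, because its weights satisfy `|w j| ≤ w i` for `i < j`, i.e. it is nonnegative on every
generator `e i ± e j`.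

Sufficiency is Abel summation. With `S k = psum v k` (indices from `0`),
`v = ∑_{k < n-2} S (k+1) • (e k - e (k+1)) + S (n-1) • e (n-2) + v (n-1) • e (n-1)`,
and the last two terms are `(S (n-1) - v (n-1)) / 2 • (e (n-2) - e (n-1))` plus
`(S (n-1) + v (n-1)) / 2 • (e (n-2) + e (n-1))`, both coefficients nonnegative by hypothesis.
-/

section PartialSums

variable {n : ℕ}

def prefixVec (v : Fin n → ℝ) (k : ℕ) : Fin n → ℝ :=
  fun i => if (i : ℕ) < k then v i else 0

theorem psum_eq_sum_prefixVec (v : Fin n → ℝ) (k : ℕ) : psum v k = ∑ i, prefixVec v k i := rfl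

@[simp]
theorem prefixVec_zero (v : Fin n → ℝ) : prefixVec v 0 = 0 := by
  ext; simp [prefixVec]

theorem prefixVec_of_le (v : Fin n → ℝ) {k : ℕ} (hk : n ≤ k) : prefixVec v k = v := by
  ext i; simp [prefixVec, i.is_lt.trans_le hk]

theorem prefixVec_succ (v : Fin n → ℝ) (i : Fin n) :
    prefixVec v (i + 1) = prefixVec v i + v i • Pi.single i 1 := by
  ext j
  by_cases hji : j = i
  · simp [prefixVec, hji]
  · simp [prefixVec, hji, le_iff_lt_or_eq, Fin.val_inj]

@[simp]
theorem psum_zero (v : Fin n → ℝ) : psum v 0 = 0 := by simp [psum_eq_sum_prefixVec]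

theorem psum_succ (v : Fin n → ℝ) (i : Fin n) : psum v (i + 1) = psum v i + v i := by
  simp [psum_eq_sum_prefixVec, prefixVec_succ, Finset.sum_add_distrib, Pi.single_apply]

theorem psum_eq_dotProduct (v : Fin n → ℝ) (k : ℕ) :
    psum v k = (fun i : Fin n => if (i : ℕ) < k then (1 : ℝ) else 0) ⬝ᵥ v := by
  simp [psum, dotProduct, ite_mul]

theorem dotProduct_eq_psum_add (v : Fin (n + 1) → ℝ) (c : ℝ) :
    (fun i : Fin (n + 1) => if (i : ℕ) < n then (1 : ℝ) else c) ⬝ᵥ v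
      = psum v n + c * v (Fin.last n) := by
  simp [psum, dotProduct, Fin.sum_univ_castSucc]

end PartialSums

section Cone

variable {n : ℕ}

theorem inConeD_zero : inConeD n 0 :=
  ⟨0, 0, fun _ _ => le_rfl, fun _ _ => le_rfl, by simp⟩

theorem inConeD.add {v w : Fin n → ℝ} (hv : inConeD n v) (hw : inConeD n w) :
    inConeD n (v + w) := by
  obtain ⟨a, b, ha, hb, rfl⟩ := hv
  obtain ⟨a', b', ha', hb', rfl⟩ := hw
  refine ⟨a + a', b + b', fun i j => add_nonneg (ha i j) (ha' i j),
    fun i j => add_nonneg (hb i j) (hb' i j), ?_⟩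
  simp only [← Finset.sum_add_distrib]
  refine Finset.sum_congr rfl fun i _ => Finset.sum_congr rfl fun j _ => ?_
  split_ifs
  · simp only [Pi.add_apply, add_smul]
    abel
  · simp

theorem inConeD_smul_add_smul {i j : Fin n} (hij : i < j) {c d : ℝ} (hc : 0 ≤ c)
    (hd : 0 ≤ d) :
    inConeD n (c • (Pi.single i 1 - Pi.single j 1) + d • (Pi.single i 1 + Pi.single j 1)) := by
  have single_nonneg {x : ℝ} (hx : 0 ≤ x) :
      0 ≤ (Pi.single i (Pi.single j x : Fin n → ℝ) : Fin n → Fin n → ℝ) :=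
    Pi.single_nonneg.2 (Pi.single_nonneg.2 hx)
  refine ⟨Pi.single i (Pi.single j c), Pi.single i (Pi.single j d),
    fun k => single_nonneg hc k, fun k => single_nonneg hd k, ?_⟩
  rw [Finset.sum_eq_single i, Finset.sum_eq_single j]
  · simp [hij]
  · intro l _ hl
    simp [hl]
  · simp
  · intro k _ hk
    simp [hk]
  · simp

theorem inConeD.dotProduct_nonneg {v : Fin n → ℝ} (hv : inConeD n v) {w : Fin n → ℝ}
    (hw : ∀ i j, i < j → |w j| ≤ w i) : 0 ≤ w ⬝ᵥ v := by
  obtain ⟨a, b, ha, hb, rfl⟩ := hv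
  simp only [dotProduct_sum]
  refine Finset.sum_nonneg fun i _ => Finset.sum_nonneg fun j _ => ?_
  split_ifs with hij
  · obtain ⟨h1, h2⟩ := abs_le.mp (hw i j hij)
    simp only [dotProduct_add, dotProduct_smul, dotProduct_sub, dotProduct_single, smul_eq_mul, mul_one]
    exact add_nonneg (mul_nonneg (ha i j) (by linarith)) (mul_nonneg (hb i j) (by linarith))
  · simp

theorem inConeD.psum_nonneg {v : Fin n → ℝ} (hv : inConeD n v) (k : ℕ) :
    0 ≤ psum v k := by
  rw [psum_eq_dotProduct]
  refine hv.dotProduct_nonneg fun i j hij => ?_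
  split_ifs <;> first | omega | norm_num

theorem inConeD.abs_last_le_psum {v : Fin (n + 1) → ℝ} (hv : inConeD (n + 1) v) :
    |v (Fin.last n)| ≤ psum v n := by
  have key {c : ℝ} (hc : |c| = 1) : 0 ≤ psum v n + c * v (Fin.last n) := by
    rw [← dotProduct_eq_psum_add]
    refine hv.dotProduct_nonneg fun i j hij => ?_
    have hi : (i : ℕ) < n := by omega
    split_ifs <;> simp [hc]
  have h1 := key (c := 1) (by simp)
  have h2 := key (c := -1) (by simp)
  rw [abs_le]
  constructor <;> linarith

end Cone

theorem inConeD_prefixVec_sub {m : ℕ} (v : Fin (m + 1) → ℝ) (i : Fin (m + 1))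
    (hpos : ∀ k, 1 ≤ k → k ≤ (i : ℕ) → 0 ≤ psum v k) :
    inConeD (m + 1) (prefixVec v i - psum v i • Pi.single i 1) := by
  induction i using Fin.induction with
  | zero => simpa using inConeD_zero
  | succ i ih =>
    have hS : 0 ≤ psum v (i + 1) := hpos _ le_add_self (by simp)
    have key : prefixVec v (i.succ : ℕ) - psum v (i.succ : ℕ) • Pi.single i.succ 1
        = (prefixVec v i.castSucc - psum v i.castSucc • Pi.single i.castSucc 1)
          + psum v (i + 1) • (Pi.single i.castSucc 1 - Pi.single i.succ 1) := by
      have h1 := prefixVec_succ v i.castSucc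
      have h2 := psum_succ v i.castSucc
      simp only [Fin.val_castSucc, Fin.val_succ] at h1 h2 ⊢
      rw [h1, h2]
      module
    rw [key]
    refine (ih fun k hk1 hk2 => hpos k hk1 ?_).add ?_
    · simp only [Fin.val_castSucc, Fin.val_succ] at hk2 ⊢
      omega
    · simpa using inConeD_smul_add_smul Fin.castSucc_lt_succ hS le_rfl

theorem inConeD_of_psum_nonneg {m : ℕ} {v : Fin (m + 2) → ℝ}
    (hpos : ∀ k, 1 ≤ k → k ≤ m → 0 ≤ psum v k) (habs : |v (Fin.last (m + 1))| ≤ psum v (m + 1)) :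
    inConeD (m + 2) v := by
  obtain ⟨hlo, hhi⟩ := abs_le.1 habs
  set e : Fin (m + 2) := (Fin.last m).castSucc
  set l : Fin (m + 2) := Fin.last (m + 1)
  have hT := inConeD_prefixVec_sub v e fun k hk1 hk2 => hpos k hk1 (by simpa [e] using hk2)
  have key : v = (prefixVec v e - psum v e • Pi.single e 1)
      + ((psum v (m + 1) - v l) / 2) • (Pi.single e 1 - Pi.single l 1)
      + ((psum v (m + 1) + v l) / 2) • (Pi.single e 1 + Pi.single l 1) := by
    have h1 := prefixVec_succ v l
    have h2 := prefixVec_succ v e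
    have h3 := psum_succ v e
    simp only [e, l, Fin.val_last, Fin.val_castSucc] at h1 h2 h3 ⊢
    rw [prefixVec_of_le v le_rfl] at h1
    nth_rw 1 [h1]
    rw [h2, h3]
    module
  rw [key, add_assoc]
  refine hT.add (inConeD_smul_add_smul (Fin.castSucc_lt_last _) ?_ ?_) <;> linarith

theorem stmt3 (n : ℕ) (hn : 2 ≤ n) (v : Fin n → ℝ) :
    inConeD n v ↔
      (∀ k, 1 ≤ k → k ≤ n - 2 → 0 ≤ psum v k) ∧
        |v ⟨n - 1, by omega⟩| ≤ psum v (n - 1) := by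
  obtain ⟨m, rfl⟩ := Nat.exists_eq_add_of_le' hn
  exact ⟨fun hv => ⟨fun k _ _ => hv.psum_nonneg k, hv.abs_last_le_psum⟩,
    fun ⟨hpos, habs⟩ => inConeD_of_psum_nonneg hpos habs⟩
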